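/- arXiv:2002.08158 — 3 statements merged into one kernel-verified Lean document; each statement's English description precedes it below -/
import Mathlib

section
/- Let p be a probability density on ℝ with CDF F, and let I ⊂ ℝ be an interval with P(I) = ∫_I p > 0. Then there exists a point ẑ ∈ I such that F(ẑ) is a dyadic rational in (0,1) with at most ⌊−log₂ P(I)⌋ nontrivial bits; in particular the bitlength R(ẑ) satisfies R(ẑ) ≤ −log₂ P(I). -/
/-! Let `G` be the primitive of the density restricted to `I`. It increases continuously from `0`
to `P(I)`, and every `t` with `0 < G t < P(I)` lies in `I`, since `I` is an interval. Choosing `a`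
and `b` where `G` is close to `0` and to `P(I)` gives points of `I` with
`F b - F a ≥ G b - G a > 2^-(r+1)` for `r = ⌊-log₂ P(I)⌋`. The interval `F(I) ⊆ [0,1]` is then
long enough to contain some `k / 2^(r+1)` with `0 < k < 2^(r+1)`. -/

open MeasureTheory Set Filter Topology

section IntegralIic

variable {f : ℝ → ℝ}

theorem continuous_integral_Iic (hf : Integrable f) :
    Continuous fun z => ∫ t in Iic z, f t := by
  have key : (fun z => ∫ t in Iic z, f t) = fun z => (∫ t in Iic 0, f t) + ∫ t in 0..z, f t := by
    funext z
    rw [← intervalIntegral.integral_Iic_sub_Iic hf.integrableOn hf.integrableOn]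
    ring
  rw [key]
  exact continuous_const.add (hf.continuous_primitive 0)

theorem monotone_integral_Iic (hf : Integrable f) (hf₀ : 0 ≤ f) :
    Monotone fun z => ∫ t in Iic z, f t := fun _ _ hab =>
  setIntegral_mono_set hf.integrableOn (ae_of_all _ hf₀) (Iic_subset_Iic.2 hab).eventuallyLE

theorem tendsto_integral_Iic_atTop (hf : Integrable f) :
    Tendsto (fun z => ∫ t in Iic z, f t) atTop (𝓝 (∫ t, f t)) :=
  (aecover_Iic tendsto_id).integral_tendsto_of_countably_generated hf

theorem tendsto_integral_Iic_atBot (hf : Integrable f) :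
    Tendsto (fun z => ∫ t in Iic z, f t) atBot (𝓝 0) := by
  have hIoi : Tendsto (fun z => ∫ t in Ioi z, f t) atBot (𝓝 (∫ t, f t)) :=
    (aecover_Ioi tendsto_id).integral_tendsto_of_countably_generated hf
  have key : (fun z => ∫ t in Iic z, f t) = fun z => (∫ t, f t) - ∫ t in Ioi z, f t :=
    funext fun z => eq_sub_of_add_eq
      (intervalIntegral.integral_Iic_add_Ioi hf.integrableOn hf.integrableOn)
  rw [key]
  simpa using (tendsto_const_nhds (x := ∫ t, f t)).sub hIoi

theorem Ioo_subset_range_integral_Iic (hf : Integrable f) :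
    Ioo 0 (∫ t, f t) ⊆ range fun z => ∫ t in Iic z, f t := fun _ hy =>
  mem_range_of_exists_le_of_exists_ge (continuous_integral_Iic hf)
    (((tendsto_integral_Iic_atBot hf).eventually (gt_mem_nhds hy.1)).exists.imp fun _ => le_of_lt)
    (((tendsto_integral_Iic_atTop hf).eventually (lt_mem_nhds hy.2)).exists.imp fun _ => le_of_lt)

theorem integral_Iic_sub_le_of_le {g : ℝ → ℝ} (hg : Integrable g) (hf : Integrable f) (hgf : g ≤ f)
    {a b : ℝ} (hab : a ≤ b) :
    (∫ t in Iic b, g t) - ∫ t in Iic a, g t ≤ (∫ t in Iic b, f t) - ∫ t in Iic a, f t := by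
  rw [intervalIntegral.integral_Iic_sub_Iic hg.integrableOn hg.integrableOn,
    intervalIntegral.integral_Iic_sub_Iic hf.integrableOn hf.integrableOn]
  exact intervalIntegral.integral_mono hab hg.intervalIntegrable hf.intervalIntegrable hgf

end IntegralIic

theorem Set.OrdConnected.subset_Ioi_or_subset_Iio {α : Type*} [LinearOrder α] {s : Set α}
    (hs : s.OrdConnected) {t : α} (ht : t ∉ s) : s ⊆ Ioi t ∨ s ⊆ Iio t := by
  by_contra! h
  obtain ⟨a, has, hat⟩ := not_subset.1 h.1
  obtain ⟨b, hbs, hbt⟩ := not_subset.1 h.2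
  exact ht (hs.out has hbs ⟨not_lt.1 hat, not_lt.1 hbt⟩)

theorem mem_of_integral_Iic_indicator_mem_Ioo {f : ℝ → ℝ} {s : Set ℝ} (hs : s.OrdConnected)
    {t : ℝ} (ht : ∫ x in Iic t, s.indicator f x ∈ Ioo 0 (∫ x, s.indicator f x)) : t ∈ s := by
  by_contra hts
  rcases hs.subset_Ioi_or_subset_Iio hts with hsub | hsub
  · refine ht.1.ne' (setIntegral_eq_zero_of_forall_eq_zero fun x hx => ?_)
    exact indicator_of_notMem (fun hxs => not_lt.2 hx (mem_Ioi.1 (hsub hxs))) f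
  · refine ht.2.ne (setIntegral_eq_integral_of_forall_compl_eq_zero fun x hx => ?_)
    exact indicator_of_notMem (fun hxs => hx (mem_Iio.1 (hsub hxs)).le) f

theorem exists_mem_lt_integral_Iic_sub {f : ℝ → ℝ} {s : Set ℝ} (hs : s.OrdConnected)
    (hf : Integrable f) (hf₀ : 0 ≤ f) {θ : ℝ} (hθ : 0 ≤ θ) (hθs : θ < ∫ x in s, f x) :
    ∃ a ∈ s, ∃ b ∈ s, θ < (∫ t in Iic b, f t) - ∫ t in Iic a, f t := by
  set P := ∫ x in s, f x
  have hg : Integrable (s.indicator f) := hf.indicator hs.measurableSet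
  have hgP : ∫ x, s.indicator f x = P := integral_indicator hs.measurableSet
  set ε := (P - θ) / 4 with hε
  obtain ⟨a, ha⟩ := Ioo_subset_range_integral_Iic hg (by rw [hgP]; constructor <;> linarith)
  obtain ⟨b, hb⟩ := Ioo_subset_range_integral_Iic hg
    (show P - ε ∈ _ by rw [hgP]; constructor <;> linarith)
  simp only at ha hb
  have hab : a ≤ b := ((monotone_integral_Iic hg (indicator_nonneg fun x _ => hf₀ x)).reflect_lt
    (by rw [ha, hb]; linarith)).le
  refine ⟨a, mem_of_integral_Iic_indicator_mem_Ioo hs (by rw [ha, hgP]; constructor <;> linarith),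
    b, mem_of_integral_Iic_indicator_mem_Ioo hs (by rw [hb, hgP]; constructor <;> linarith), ?_⟩
  calc θ < (P - ε) - ε := by linarith
    _ = (∫ t in Iic b, s.indicator f t) - ∫ t in Iic a, s.indicator f t := by rw [ha, hb]
    _ ≤ _ := integral_Iic_sub_le_of_le hg hf (indicator_le_self' fun x _ => hf₀ x) hab

theorem exists_nat_div_mem_Icc {x y : ℝ} {N : ℕ} (hN : 0 < N) (hx : 0 ≤ x) (hy : y ≤ 1)
    (hxy : 1 / N < y - x) : ∃ k : ℕ, 0 < k ∧ k < N ∧ (k : ℝ) / N ∈ Icc x y := by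
  have hN' : (0 : ℝ) < N := by exact_mod_cast hN
  set k := ⌊x * N⌋₊ + 1
  have hk : x * N < k := by push_cast [k]; exact Nat.lt_floor_add_one _
  have hk' : (k : ℝ) ≤ x * N + 1 := by
    have := Nat.floor_le (mul_nonneg hx hN'.le); push_cast [k]; linarith
  have hxk : x < k / N := (lt_div_iff₀ hN').2 hk
  have hky : k / N < y := by
    calc (k : ℝ) / N ≤ (x * N + 1) / N := by gcongr
      _ = x + 1 / N := by field_simp
      _ < y := by linarith
  refine ⟨k, Nat.succ_pos _, ?_, hxk.le, hky.le⟩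
  exact_mod_cast (div_lt_one hN').1 (hky.trans_le hy)

theorem exists_nat_le_neg_logb_two_and_lt {P : ℝ} (hP : 0 < P) (hP₁ : P ≤ 1) :
    ∃ r : ℕ, (r : ℝ) ≤ -Real.logb 2 P ∧ 1 / (2 : ℝ) ^ (r + 1) < P := by
  have hlog : 0 ≤ -Real.logb 2 P := neg_nonneg.2 (Real.logb_nonpos one_lt_two hP.le hP₁)
  refine ⟨⌊-Real.logb 2 P⌋₊, Nat.floor_le hlog, ?_⟩
  have h := Nat.lt_floor_add_one (-Real.logb 2 P)
  rw [one_div, ← Real.rpow_natCast, ← Real.rpow_neg zero_le_two,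
    ← Real.lt_logb_iff_rpow_lt one_lt_two hP]
  push_cast
  linarith

theorem vbq_grid_point_in_interval_general
    (p : ℝ → ℝ) (hp : ∀ z, 0 ≤ p z) (hint : Integrable p)
    (hnorm : ∫ z, p z = 1)
    (F : ℝ → ℝ) (hF : ∀ z, F z = ∫ t in Set.Iic z, p t)
    (I : Set ℝ) (hI : I.OrdConnected)
    (hP : 0 < ∫ z in I, p z) :
    ∃ z ∈ I, ∃ r : ℕ, (∃ k : ℕ, 0 < k ∧ k < 2 ^ (r + 1) ∧
        F z = (k : ℝ) / 2 ^ (r + 1)) ∧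
      (r : ℝ) ≤ -Real.logb 2 (∫ z in I, p z) := by
  obtain rfl : F = fun z => ∫ t in Iic z, p t := funext hF
  have hle_one : ∀ s, ∫ z in s, p z ≤ 1 := fun s =>
    hnorm ▸ setIntegral_le_integral hint (ae_of_all _ hp)
  obtain ⟨r, hr, hrP⟩ := exists_nat_le_neg_logb_two_and_lt hP (hle_one I)
  obtain ⟨a, ha, b, hb, hab⟩ := exists_mem_lt_integral_Iic_sub hI hint hp (by positivity) hrP
  obtain ⟨k, hk₀, hkN, hk⟩ := exists_nat_div_mem_Icc (N := 2 ^ (r + 1)) (by positivity)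
    (setIntegral_nonneg measurableSet_Iic fun x _ => hp x) (hle_one _) (by push_cast; exact hab)
  have hFI : IsPreconnected ((fun z => ∫ t in Iic z, p t) '' I) :=
    hI.isPreconnected.image _ (continuous_integral_Iic hint).continuousOn
  obtain ⟨z, hz, hFz⟩ := hFI.Icc_subset (mem_image_of_mem _ ha) (mem_image_of_mem _ hb) hk
  exact ⟨z, hz, r, ⟨k, hk₀, hkN, by rw [hFz]; push_cast; rfl⟩, hr⟩

/-- Theorem 1 of the VBQ paper: let `p` be a probability density on `ℝ` with CDF `F`,
and let `I` be an interval with probability `P(I) = ∫_I p > 0`.  Then there is a grid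
point `ẑ ∈ I`, i.e. a point whose quantile `F ẑ` is a dyadic rational in `(0,1)`, whose
bitlength (number of nontrivial bits) `r` satisfies `r ≤ -log₂ P(I)`. -/
theorem vbq_grid_point_in_interval
    (p : ℝ → ℝ) (hp : ∀ z, 0 ≤ p z) (hint : Integrable p)
    (hnorm : ∫ z, p z = 1)
    (F : ℝ → ℝ) (hF : ∀ z, F z = ∫ t in Set.Iic z, p t)
    (I : Set ℝ) (hI : I.OrdConnected) (hImeas : MeasurableSet I)
    (hP : 0 < ∫ z in I, p z) :
    ∃ z ∈ I, ∃ r : ℕ, (∃ k : ℕ, 0 < k ∧ k < 2 ^ (r + 1) ∧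
        F z = (k : ℝ) / 2 ^ (r + 1)) ∧
      (r : ℝ) ≤ -Real.logb 2 (∫ z in I, p z) :=
  vbq_grid_point_in_interval_general p hp hint hnorm F hF I hI hP
end

section
/- Let p be a probability density on ℝ with CDF F and let the intervals Iₙ = [n − 1/2, n + 1/2) for n ∈ ℤ have probabilities Pₙ = ∫_{Iₙ} p. For each n with Pₙ > 0 choose a grid point ẑₙ ∈ Iₙ with bitlength R(ẑₙ) ≤ −log₂ Pₙ (which exists by Theorem 1). Then the map n ↦ ẑₙ is injective and the expected bitlength satisfies Σₙ Pₙ R(ẑₙ) ≤ H, where H = −Σₙ Pₙ log₂ Pₙ is the entropy of the induced discrete distribution. -/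
open MeasureTheory

theorem eq_of_mem_Ico_sub_half_add_half {α : Type*} [Field α] [LinearOrder α]
    [IsStrictOrderedRing α] [FloorRing α] {x : α} {n m : ℤ}
    (hn : x ∈ Set.Ico ((n : α) - 1 / 2) (n + 1 / 2))
    (hm : x ∈ Set.Ico ((m : α) - 1 / 2) (m + 1 / 2)) : n = m :=
  (round_eq_iff.2 hn).symm.trans (round_eq_iff.2 hm)

theorem mul_le_neg_mul_logb_of_le_neg_logb {b P r : ℝ} (hP : 0 ≤ P)
    (hr : 0 < P → r ≤ -Real.logb b P) : P * r ≤ -(P * Real.logb b P) := by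
  rcases hP.eq_or_lt with rfl | hpos
  · simp
  · rw [← mul_neg]
    exact mul_le_mul_of_nonneg_left (hr hpos) hP

theorem tsum_le_tsum_of_nonneg_of_le {ι : Type*} {f g : ι → ℝ} (hf : ∀ i, 0 ≤ f i)
    (hfg : ∀ i, f i ≤ g i) (hg : Summable g) : ∑' i, f i ≤ ∑' i, g i :=
  (hg.of_nonneg_of_le hf hfg).tsum_le_tsum hfg hg

theorem vbq_sparse_grid_bitrate_general
    (p : ℝ → ℝ) (hp : ∀ z, 0 ≤ p z)
    (F : ℝ → ℝ)
    (P : ℤ → ℝ)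
    (hP : ∀ n, P n = ∫ z in Set.Ico ((n : ℝ) - 1 / 2) ((n : ℝ) + 1 / 2), p z)
    (z : ℤ → ℝ) (R : ℤ → ℕ)
    (hz : ∀ n, 0 < P n →
      z n ∈ Set.Ico ((n : ℝ) - 1 / 2) ((n : ℝ) + 1 / 2) ∧
      (∃ k : ℕ, 0 < k ∧ k < 2 ^ (R n + 1) ∧ F (z n) = (k : ℝ) / 2 ^ (R n + 1)) ∧
      (R n : ℝ) ≤ -Real.logb 2 (P n))
    (hHsum : Summable (fun n : ℤ => -(P n * Real.logb 2 (P n)))) :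
    (∀ n m : ℤ, 0 < P n → 0 < P m → z n = z m → n = m) ∧
      ∑' n : ℤ, P n * (R n : ℝ) ≤ ∑' n : ℤ, -(P n * Real.logb 2 (P n)) := by
  have hP_nonneg (n : ℤ) : 0 ≤ P n :=
    hP n ▸ setIntegral_nonneg measurableSet_Ico fun x _ => hp x
  refine ⟨fun n m hn hm hzz => ?_, ?_⟩
  · exact eq_of_mem_Ico_sub_half_add_half (hzz ▸ (hz n hn).1) (hz m hm).1
  · exact tsum_le_tsum_of_nonneg_of_le (fun n => mul_nonneg (hP_nonneg n) (Nat.cast_nonneg _))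
      (fun n => mul_le_neg_mul_logb_of_le_neg_logb (hP_nonneg n) fun h => (hz n h).2.2) hHsum

/-- Section 6 of the VBQ paper: let `p` be a probability density with CDF `F`, and
for `n ∈ ℤ` let `Pₙ` be the probability of the interval `Iₙ = [n - 1/2, n + 1/2)`.
If for each `n` with `Pₙ > 0` we choose a grid point `ẑₙ ∈ Iₙ` (a point whose
quantile `F ẑₙ` is dyadic with `R n` nontrivial bits) with `R n ≤ -log₂ Pₙ`,
then the map `n ↦ ẑₙ` is injective on `{n | Pₙ > 0}` and the expected bitlength is
at most the entropy of the induced discrete distribution: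
`Σₙ Pₙ R(ẑₙ) ≤ -Σₙ Pₙ log₂ Pₙ`. -/
theorem vbq_sparse_grid_bitrate
    (p : ℝ → ℝ) (hp : ∀ z, 0 ≤ p z) (hint : Integrable p)
    (hnorm : ∫ z, p z = 1)
    (F : ℝ → ℝ) (hF : ∀ z, F z = ∫ t in Set.Iic z, p t)
    (P : ℤ → ℝ)
    (hP : ∀ n, P n = ∫ z in Set.Ico ((n : ℝ) - 1 / 2) ((n : ℝ) + 1 / 2), p z)
    (z : ℤ → ℝ) (R : ℤ → ℕ)
    (hz : ∀ n, 0 < P n →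
      z n ∈ Set.Ico ((n : ℝ) - 1 / 2) ((n : ℝ) + 1 / 2) ∧
      (∃ k : ℕ, 0 < k ∧ k < 2 ^ (R n + 1) ∧ F (z n) = (k : ℝ) / 2 ^ (R n + 1)) ∧
      (R n : ℝ) ≤ -Real.logb 2 (P n))
    (hHsum : Summable (fun n : ℤ => -(P n * Real.logb 2 (P n)))) :
    (∀ n m : ℤ, 0 < P n → 0 < P m → z n = z m → n = m) ∧
      ∑' n : ℤ, P n * (R n : ℝ) ≤ ∑' n : ℤ, -(P n * Real.logb 2 (P n)) :=
  vbq_sparse_grid_bitrate_general p hp F P hP z R hz hHsum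
end

section
/- Under a factorized Gaussian posterior, the quadratic distortion weight in the VBQ objective implies: if σᵢ² > σⱼ² and all else is equal (μᵢ = μⱼ, same prior CDF F), then the optimal code point for coordinate i has bitlength at most that of the optimal code point for coordinate j, i.e., R(ξᵢ*) ≤ R(ξⱼ*) for some choice of minimizers. -/
/-!
The rate `R` takes values in `ℕ` and only finitely many dyadic rationals have bitlength at most
any given `N`, so both objectives (a nonnegative distortion plus a positive multiple of `R`)
attain their minimum on the dyadics. For minimizers `ξᵢ`, `ξⱼ` of the objectives with rate
weights `a > b`, adding the two optimality inequalities `ℓₐ(ξᵢ) ≤ ℓₐ(ξⱼ)` and `ℓ_b(ξⱼ) ≤ ℓ_b(ξᵢ)`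
cancels the distortion and leaves `(a - b) (R ξᵢ - R ξⱼ) ≤ 0`.
-/

open Set

def dyadicUnitInterval : Set ℝ :=
  {ξ : ℝ | ∃ k n : ℕ, 0 < k ∧ k < 2 ^ n ∧ ξ = (k : ℝ) / 2 ^ n}

lemma exists_odd_div_two_pow_eq {k n : ℕ} (hk : 0 < k) (hkn : k < 2 ^ n) :
    ∃ m e : ℕ, Odd m ∧ m < 2 ^ e ∧ (k : ℝ) / 2 ^ n = m / 2 ^ e := by
  obtain ⟨e, m, hm, rfl⟩ := Nat.exists_eq_two_pow_mul_odd hk.ne'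
  have hen : e ≤ n :=
    (Nat.pow_lt_pow_iff_right (by norm_num)).mp ((Nat.le_mul_of_pos_right _ hm.pos).trans_lt hkn)
    |>.le
  obtain ⟨f, rfl⟩ := Nat.exists_eq_add_of_le hen
  refine ⟨m, f, hm, ?_, ?_⟩
  · rw [pow_add] at hkn
    exact Nat.lt_of_mul_lt_mul_left hkn
  · push_cast
    rw [pow_add, mul_div_mul_left _ _ (by positivity)]

lemma finite_dyadicUnitInterval_inter_le (R : ℝ → ℕ)
    (hR : ∀ k n : ℕ, Odd k → k < 2 ^ n → R ((k : ℝ) / 2 ^ n) = n - 1) (N : ℕ) :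
    {ξ ∈ dyadicUnitInterval | R ξ ≤ N}.Finite := by
  refine ((finite_Iic (N + 1)).image2 (fun (e m : ℕ) => (m : ℝ) / 2 ^ e)
    (finite_Iio (2 ^ (N + 1)))).subset ?_
  rintro _ ⟨⟨k, n, hk, hkn, rfl⟩, hRN⟩
  obtain ⟨m, e, hm, hme, heq⟩ := exists_odd_div_two_pow_eq hk hkn
  rw [heq, hR m e hm hme] at hRN
  have he : e ≤ N + 1 := by omega
  exact ⟨e, he, m, hme.trans_le (Nat.pow_le_pow_right two_pos he), heq.symm⟩

lemma exists_isMinOn_add_mul {α : Type*} {S : Set α} {g : α → ℕ}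
    (hfin : ∀ N : ℕ, {x ∈ S | g x ≤ N}.Finite) (hS : S.Nonempty)
    {d : α → ℝ} (hd : ∀ x, 0 ≤ d x) {c : ℝ} (hc : 0 < c) :
    ∃ x ∈ S, IsMinOn (fun x => d x + c * g x) S x := by
  set f : α → ℝ := fun x => d x + c * g x
  obtain ⟨x₀, hx₀⟩ := hS
  obtain ⟨N, hN⟩ := exists_nat_ge (f x₀ / c)
  set T := {x ∈ S | f x ≤ f x₀}
  have hT : T.Finite := (hfin N).subset fun x ⟨hxS, hx⟩ => by
    refine ⟨hxS, ?_⟩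
    have : c * g x ≤ c * N := by
      linarith [hd x, (div_le_iff₀' hc).mp hN]
    exact_mod_cast le_of_mul_le_mul_left this hc
  obtain ⟨x, ⟨hxS, hxT⟩, hmin⟩ := exists_min_image T f hT ⟨x₀, hx₀, le_rfl⟩
  refine ⟨x, hxS, isMinOn_iff.mpr fun y hy => ?_⟩
  by_cases hy₀ : f y ≤ f x₀
  · exact hmin y ⟨hy, hy₀⟩
  · linarith

lemma le_of_isMinOn_add_mul {α : Type*} {S : Set α} {d g : α → ℝ} {a b : ℝ} {x y : α}
    (hx : IsMinOn (fun z => d z + a * g z) S x) (hy : IsMinOn (fun z => d z + b * g z) S y)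
    (hxS : x ∈ S) (hyS : y ∈ S) (hba : b < a) : g x ≤ g y := by
  have hxy : d x + a * g x ≤ d y + a * g y := isMinOn_iff.mp hx y hyS
  have hyx : d y + b * g y ≤ d x + b * g x := isMinOn_iff.mp hy x hxS
  have hsum : (a - b) * (g x - g y) ≤ 0 := by linarith
  exact sub_nonpos.mp (nonpos_of_mul_nonpos_right hsum (sub_pos.mpr hba))

theorem vbq_bits_decrease_with_uncertainty_general
    (Finv : ℝ → ℝ)
    (μ lam σi σj : ℝ) (hlam : 0 < lam) (hσj : 0 < σj) (hij : σj ^ 2 < σi ^ 2)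
    (R : ℝ → ℕ)
    (hR : ∀ k n : ℕ, Odd k → k < 2 ^ n → R ((k : ℝ) / 2 ^ n) = n - 1)
    (D : Set ℝ) (hD : D = {ξ : ℝ | ∃ k n : ℕ, 0 < k ∧ k < 2 ^ n ∧ ξ = (k : ℝ) / 2 ^ n})
    (ℓ : ℝ → ℝ → ℝ)
    (hℓ : ∀ s ξ, ℓ s ξ = (Finv ξ - μ) ^ 2 + 2 * lam * s * (R ξ : ℝ)) :
    ∃ ξi ∈ D, ∃ ξj ∈ D,
      (∀ ξ ∈ D, ℓ (σi ^ 2) ξi ≤ ℓ (σi ^ 2) ξ) ∧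
      (∀ ξ ∈ D, ℓ (σj ^ 2) ξj ≤ ℓ (σj ^ 2) ξ) ∧
      R ξi ≤ R ξj := by
  change D = dyadicUnitInterval at hD
  obtain rfl : ℓ = fun s ξ => (Finv ξ - μ) ^ 2 + 2 * lam * s * (R ξ : ℝ) :=
    funext fun s => funext (hℓ s)
  subst hD
  have hfin := finite_dyadicUnitInterval_inter_le R hR
  have hne : dyadicUnitInterval.Nonempty := ⟨1 / 2, 1, 1, one_pos, by norm_num, by norm_num⟩
  have hdist : ∀ ξ, 0 ≤ (Finv ξ - μ) ^ 2 := fun ξ => sq_nonneg _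
  have hσj2 : 0 < σj ^ 2 := by positivity
  have hσi2 : 0 < σi ^ 2 := hσj2.trans hij
  obtain ⟨ξi, hξiD, hξi⟩ :=
    exists_isMinOn_add_mul hfin hne hdist (c := 2 * lam * σi ^ 2) (by positivity)
  obtain ⟨ξj, hξjD, hξj⟩ :=
    exists_isMinOn_add_mul hfin hne hdist (c := 2 * lam * σj ^ 2) (by positivity)
  refine ⟨ξi, hξiD, ξj, hξjD, isMinOn_iff.mp hξi, isMinOn_iff.mp hξj, ?_⟩
  exact_mod_cast le_of_isMinOn_add_mul hξi hξj hξiD hξjD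
    (mul_lt_mul_of_pos_left hij (by positivity))

/-- Monotonicity of the optimal VBQ bitlength in the posterior uncertainty: for the
per-coordinate objective `ℓ(ξ; σ²) = (F⁻¹(ξ) - μ)² + 2λσ²R(ξ)` over the dyadic
rationals `ξ ∈ (0,1)`, if `σᵢ² > σⱼ²` (all else equal), then there exist minimizers
`ξᵢ*` and `ξⱼ*` of the two objectives with `R(ξᵢ*) ≤ R(ξⱼ*)`: higher uncertainty
leads to (weakly) fewer bits. -/
theorem vbq_bits_decrease_with_uncertainty
    (F Finv : ℝ → ℝ) (hF : Continuous F) (hmono : StrictMono F)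
    (hrange : Set.range F = Set.Ioo (0 : ℝ) 1)
    (hleft : ∀ z, Finv (F z) = z)
    (hright : ∀ ξ ∈ Set.Ioo (0 : ℝ) 1, F (Finv ξ) = ξ)
    (μ lam σi σj : ℝ) (hlam : 0 < lam) (hσj : 0 < σj) (hij : σj ^ 2 < σi ^ 2)
    (R : ℝ → ℕ)
    (hR : ∀ k n : ℕ, Odd k → k < 2 ^ n → R ((k : ℝ) / 2 ^ n) = n - 1)
    (D : Set ℝ) (hD : D = {ξ : ℝ | ∃ k n : ℕ, 0 < k ∧ k < 2 ^ n ∧ ξ = (k : ℝ) / 2 ^ n})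
    (ℓ : ℝ → ℝ → ℝ)
    (hℓ : ∀ s ξ, ℓ s ξ = (Finv ξ - μ) ^ 2 + 2 * lam * s * (R ξ : ℝ)) :
    ∃ ξi ∈ D, ∃ ξj ∈ D,
      (∀ ξ ∈ D, ℓ (σi ^ 2) ξi ≤ ℓ (σi ^ 2) ξ) ∧
      (∀ ξ ∈ D, ℓ (σj ^ 2) ξj ≤ ℓ (σj ^ 2) ξ) ∧
      R ξi ≤ R ξj :=
  vbq_bits_decrease_with_uncertainty_general Finv μ lam σi σj hlam hσj hij R hR D hD ℓ hℓ
end
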